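/- arXiv:2003.07283 — 4 statements merged into one kernel-verified Lean document; each statement's English description precedes it below -/
import Mathlib

section
/- Let G be a finite directed acyclic graph containing arcs (u,v), (v,w), (w,z) for distinct vertices u,v,w,z. Let G' be obtained by replacing these three arcs with (u,w), (w,v), (v,z). If G' contains a directed cycle, then any shortest directed cycle in G' uses the arc (w,v). -/
/-!
Every arc of `G'` other than `(w, v)` is realised by a directed path of `G`: `(u, w)` by
`u → v → w`, `(v, z)` by `v → w → z`, and the remaining arcs are arcs of `G`. Hence a closed
walk in `G'` avoiding `(w, v)` would give a closed walk in the acyclic graph `G`. So every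
directed cycle of `G'`, and in particular every shortest one, traverses `(w, v)`.
-/

/-- A directed graph on vertex set `V` is given by a finite set of arcs `A ⊆ V × V`;
`Adj A u v` means there is an arc from `u` to `v`. -/
def Adj {V : Type} (A : Finset (V × V)) (u v : V) : Prop := (u, v) ∈ A

/-- In-degree of a vertex. -/
def inDeg {V : Type} [DecidableEq V] (A : Finset (V × V)) (v : V) : ℕ :=
  (A.filter (fun e => e.2 = v)).card

/-- Out-degree of a vertex. -/
def outDeg {V : Type} [DecidableEq V] (A : Finset (V × V)) (v : V) : ℕ :=
  (A.filter (fun e => e.1 = v)).card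

/-- A leaf is a vertex of in-degree 1 and out-degree 0. -/
def IsLeaf {V : Type} [DecidableEq V] (A : Finset (V × V)) (v : V) : Prop :=
  inDeg A v = 1 ∧ outDeg A v = 0

/-- A directed graph is acyclic if it has no directed cycle,
i.e. no vertex has a nontrivial directed path to itself. -/
def Acyclic {V : Type} (A : Finset (V × V)) : Prop :=
  ∀ v : V, ¬ Relation.TransGen (Adj A) v v

/-- A binary rooted phylogenetic network: a finite directed acyclic simple graph whose
vertices are the root (in-degree 0, out-degree 1 or 2), leaves (in-degree 1, out-degree 0),
tree vertices (in-degree 1, out-degree 2) and reticulation vertices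
(in-degree 2, out-degree 1). -/
structure IsPhyloNetwork {V : Type} [Fintype V] [DecidableEq V]
    (A : Finset (V × V)) (root : V) : Prop where
  acyclic : Acyclic A
  root_in : inDeg A root = 0
  root_out : outDeg A root = 1 ∨ outDeg A root = 2
  vertex_types : ∀ v : V, v ≠ root →
    (inDeg A v = 1 ∧ outDeg A v = 0) ∨
    (inDeg A v = 1 ∧ outDeg A v = 2) ∨
    (inDeg A v = 2 ∧ outDeg A v = 1)

/-- The arc replacement of an rNNI move: arcs `(u,v),(v,w),(w,z)` are replaced by
`(u,w),(w,v),(v,z)`. -/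
def rnniSwap {V : Type} [DecidableEq V] (A : Finset (V × V)) (u v w z : V) :
    Finset (V × V) :=
  (A \ {(u, v), (v, w), (w, z)}) ∪ {(u, w), (w, v), (v, z)}

/-- A directed cycle: a nonempty list of distinct vertices such that consecutive
vertices (cyclically) are joined by arcs. `List.Chain (Adj A) (c.getLast h) c`
says the closed walk last → first → second → ⋯ → last consists of arcs. -/
def IsDCycle {V : Type} (A : Finset (V × V)) (c : List V) : Prop :=
  ∃ h : c ≠ [], c.Nodup ∧ List.Chain (Adj A) (c.getLast h) c

/-- The arcs traversed by the closed walk determined by the cycle list `c`. -/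
def cycleArcs {V : Type} (c : List V) (h : c ≠ []) : List (V × V) :=
  (c.getLast h :: c).zip c

open Relation (TransGen transGen_eq_self)

namespace List

variable {α : Type*} {R S : α → α → Prop}

theorem IsChain.imp_of_mem_zip_tail :
    ∀ {l : List α}, IsChain R l → (∀ a b, (a, b) ∈ l.zip l.tail → R a b → S a b) →
      IsChain S l
  | [], _, _ => .nil
  | [_], _, _ => .singleton _
  | a :: b :: l, h, H => by
      rw [isChain_cons_cons] at h ⊢
      exact ⟨H a b (by simp) h.1,
        h.2.imp_of_mem_zip_tail fun x y hxy => H x y (mem_cons_of_mem _ hxy)⟩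

theorem IsChain.transGen_getLast {a : α} :
    ∀ {l : List α}, IsChain R (a :: l) → (hl : l ≠ []) → TransGen R a (l.getLast hl)
  | [], _, hl => absurd rfl hl
  | b :: l, h, _ => by
      rw [isChain_cons_cons] at h
      exact TransGen.head'_iff.mpr
        ⟨b, h.1, relationReflTransGen_of_exists_isChain_cons l h.2 rfl⟩

end List

theorem mem_cycleArcs_of_acyclic {V : Type} {A B : Finset (V × V)} (hA : Acyclic A)
    {e : V × V} (hB : ∀ a b, Adj B a b → (a, b) ≠ e → TransGen (Adj A) a b)
    {c : List V} (hc : c ≠ []) (hchain : (c.getLast hc :: c).IsChain (Adj B)) :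
    e ∈ cycleArcs c hc := by
  by_contra he
  have hpaths : (c.getLast hc :: c).IsChain (TransGen (Adj A)) :=
    List.IsChain.imp_of_mem_zip_tail hchain fun a b hab hB_ab =>
      hB a b hB_ab fun hae => he (hae ▸ hab)
  exact hA _ (transGen_eq_self (r := TransGen (Adj A)) ▸ hpaths.transGen_getLast hc)

theorem transGen_of_adj_rnniSwap {V : Type} [DecidableEq V] {A : Finset (V × V)} {u v w z : V}
    (huv : (u, v) ∈ A) (hvw : (v, w) ∈ A) (hwz : (w, z) ∈ A) {a b : V}
    (hab : Adj (rnniSwap A u v w z) a b) (hne : (a, b) ≠ (w, v)) :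
    TransGen (Adj A) a b := by
  rcases Finset.mem_union.mp hab with hold | hnew
  · exact .single (Finset.mem_sdiff.mp hold).1
  · simp only [Finset.mem_insert, Finset.mem_singleton, Prod.mk.injEq] at hnew
    rcases hnew with ⟨rfl, rfl⟩ | ⟨rfl, rfl⟩ | ⟨rfl, rfl⟩
    · exact .head huv (.single hvw)
    · exact absurd rfl hne
    · exact .head hvw (.single hwz)

theorem stmt1_general {V : Type} [DecidableEq V]
    (A : Finset (V × V)) (hAc : Acyclic A) (u v w z : V)
    (huv : (u, v) ∈ A) (hvw : (v, w) ∈ A) (hwz : (w, z) ∈ A)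
    (c : List V) (hc : c ≠ [])
    (hchain : List.Chain (Adj (rnniSwap A u v w z)) (c.getLast hc) c) :
    (w, v) ∈ cycleArcs c hc :=
  mem_cycleArcs_of_acyclic hAc (fun _ _ => transGen_of_adj_rnniSwap huv hvw hwz) hc hchain

/-- If the graph obtained from a DAG by an rNNI arc replacement contains a directed
cycle, then any shortest directed cycle in it traverses the arc `(w, v)`. -/
theorem stmt1 {V : Type} [Fintype V] [DecidableEq V]
    (A : Finset (V × V)) (hAc : Acyclic A) (u v w z : V)
    (hdist : ([u, v, w, z] : List V).Nodup)
    (huv : (u, v) ∈ A) (hvw : (v, w) ∈ A) (hwz : (w, z) ∈ A)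
    (c : List V) (hc : c ≠ []) (hnd : c.Nodup)
    (hchain : List.Chain (Adj (rnniSwap A u v w z)) (c.getLast hc) c)
    (hmin : ∀ c' : List V, IsDCycle (rnniSwap A u v w z) c' → c.length ≤ c'.length) :
    (w, v) ∈ cycleArcs c hc :=
  stmt1_general A hAc u v w z huv hvw hwz c hc hchain
end

section
/- Let G be a finite directed acyclic graph with arcs (u,v), (v,w), (w,z) for distinct vertices u,v,w,z, and suppose every directed cycle of the graph G' obtained by replacing these arcs with (u,w), (w,v), (v,z) must use at least two of the arcs incident to v or w other than the path arcs. If G' contains no arc pair realizing a directed path from a successor of v back to a predecessor of w outside the path, and in G there is no directed path from any out-neighbor of v (other than w) to any in-neighbor of w (other than v), then G' is acyclic. -/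
/-!
The three new arcs of `G'` form the path `u → w → v → z`; all other arcs of `G'` are arcs of
`G`. A closed walk in `G'` through a new arc must get back, along arcs of `G`, from a later
vertex of this path to an earlier one. Five of the six such returns close a cycle with
`u → v → w → z` in `G`; the sixth, a `G`-path from `v` to `w` avoiding the arc `(v, w)`, is
excluded by the hypothesis on out-neighbours of `v` and in-neighbours of `w`.
-/

namespace Relation

variable {α : Type*} {r : α → α → Prop} {n : ℕ} {x : Fin (n + 1) → α}

def PathArcs (x : Fin (n + 1) → α) (a b : α) : Prop :=
  ∃ i : Fin n, a = x i.castSucc ∧ b = x i.succ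

theorem transGen_sup_pathArcs {a b : α}
    (hback : ∀ i j, i < j → ¬ ReflTransGen r (x j) (x i))
    (h : TransGen (r ⊔ PathArcs x) a b) :
    TransGen r a b ∨ ∃ i j, i < j ∧ ReflTransGen r a (x i) ∧ ReflTransGen r (x j) b := by
  induction h with
  | single hab =>
    rcases hab with hab | ⟨i, rfl, rfl⟩
    · exact .inl (.single hab)
    · exact .inr ⟨_, _, Fin.castSucc_lt_succ, .refl, .refl⟩
  | tail _ hbc ih =>
    rcases hbc with hbc | ⟨k, rfl, rfl⟩
    · rcases ih with hab | ⟨i, j, hij, hai, hjb⟩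
      · exact .inl (hab.tail hbc)
      · exact .inr ⟨i, j, hij, hai, hjb.tail hbc⟩
    · rcases ih with hab | ⟨i, j, hij, hai, hjk⟩
      · exact .inr ⟨_, _, Fin.castSucc_lt_succ, hab.to_reflTransGen, .refl⟩
      · have hjk' : j ≤ k.castSucc := not_lt.1 fun hkj => hback _ _ hkj hjk
        exact .inr ⟨i, k.succ, hij.trans_le (hjk'.trans Fin.castSucc_lt_succ.le), hai, .refl⟩

theorem not_transGen_sup_pathArcs_self (hr : ∀ a, ¬ TransGen r a a)
    (hback : ∀ i j, i < j → ¬ ReflTransGen r (x j) (x i)) (a : α) :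
    ¬ TransGen (r ⊔ PathArcs x) a a := fun h =>
  (transGen_sup_pathArcs hback h).elim (hr a) fun ⟨i, j, hij, hai, hja⟩ =>
    hback i j hij (hja.trans hai)

end Relation

section Digraph

variable {V : Type} {A B : Finset (V × V)}

theorem Acyclic.mono (hA : Acyclic A) (hBA : B ⊆ A) : Acyclic B := fun a h =>
  hA a (Relation.TransGen.mono (fun _ _ hab => hBA hab) a a h)

theorem Acyclic.ne_of_mem (hA : Acyclic A) {a b : V} (hab : (a, b) ∈ A) : a ≠ b := by
  rintro rfl
  exact hA a (.single hab)

theorem Acyclic.not_reflTransGen_of_transGen (hA : Acyclic A) (hBA : B ⊆ A) {a b : V}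
    (hab : Relation.TransGen (Adj A) a b) : ¬ Relation.ReflTransGen (Adj B) b a := fun hba =>
  hA a (hab.trans_left (Relation.ReflTransGen.mono (fun _ _ h => hBA h) b a hba))

/-- A path from `v` to `w` avoiding the arc `(v, w)` leaves `v` through some `x ≠ w` and
enters `w` through some `y ≠ v`. -/
theorem not_reflTransGen_of_no_bypass (hA : Acyclic A) (hBA : B ⊆ A) {v w : V}
    (hvw : (v, w) ∈ A) (hvwB : (v, w) ∉ B)
    (hbypass : ∀ x y : V, (v, x) ∈ A → x ≠ w → (y, w) ∈ A → y ≠ v →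
      ¬ Relation.ReflTransGen (Adj A) x y) :
    ¬ Relation.ReflTransGen (Adj B) v w := by
  intro h
  obtain rfl | ⟨x, hvx, hxw⟩ := h.cases_head
  · exact hA.ne_of_mem hvw rfl
  have hxw_ne : x ≠ w := by rintro rfl; exact hvwB hvx
  obtain rfl | ⟨y, hxy, hyw⟩ := hxw.cases_tail
  · exact hxw_ne rfl
  have hyv : y ≠ v := by rintro rfl; exact hvwB hyw
  exact hbypass x y (hBA hvx) hxw_ne (hBA hyw) hyv
    (Relation.ReflTransGen.mono (fun _ _ h => hBA h) x y hxy)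

end Digraph

theorem adj_rnniSwap_le {V : Type} [DecidableEq V] (A : Finset (V × V)) (u v w z : V) :
    Adj (rnniSwap A u v w z) ≤
      Adj (A \ {(u, v), (v, w), (w, z)}) ⊔ Relation.PathArcs ![u, w, v, z] := by
  intro a b hab
  simp only [Adj, rnniSwap, Finset.mem_union, Finset.mem_insert, Finset.mem_singleton,
    Prod.mk.injEq] at hab
  rcases hab with hab | ⟨rfl, rfl⟩ | ⟨rfl, rfl⟩ | ⟨rfl, rfl⟩
  · exact .inl hab
  · exact .inr ⟨0, rfl, rfl⟩
  · exact .inr ⟨1, rfl, rfl⟩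
  · exact .inr ⟨2, rfl, rfl⟩

theorem stmt2_general {V : Type} [DecidableEq V]
    (A : Finset (V × V)) (hAc : Acyclic A) (u v w z : V)
    (huv : (u, v) ∈ A) (hvw : (v, w) ∈ A) (hwz : (w, z) ∈ A)
    (H3 : ∀ x y : V, (v, x) ∈ A → x ≠ w → (y, w) ∈ A → y ≠ v →
      ¬ Relation.ReflTransGen (Adj A) x y) :
    Acyclic (rnniSwap A u v w z) := by
  set B := A \ {(u, v), (v, w), (w, z)}
  have hBA : B ⊆ A := Finset.sdiff_subset
  have hback : ∀ i j : Fin 4, i < j →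
      ¬ Relation.ReflTransGen (Adj B) (![u, w, v, z] j) (![u, w, v, z] i) := by
    intro i j hij
    fin_cases i <;> fin_cases j <;> try exact absurd hij (by decide)
    · exact hAc.not_reflTransGen_of_transGen hBA (.tail (.single huv) hvw)
    · exact hAc.not_reflTransGen_of_transGen hBA (.single huv)
    · exact hAc.not_reflTransGen_of_transGen hBA (.tail (.tail (.single huv) hvw) hwz)
    · exact not_reflTransGen_of_no_bypass hAc hBA hvw (by simp [B]) H3
    · exact hAc.not_reflTransGen_of_transGen hBA (.single hwz)
    · exact hAc.not_reflTransGen_of_transGen hBA (.tail (.single hvw) hwz)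
  exact fun a h => Relation.not_transGen_sup_pathArcs_self (hAc.mono hBA) hback a
    (Relation.TransGen.mono (adj_rnniSwap_le A u v w z) a a h)

/-- If every directed cycle of the graph `G'` obtained by the rNNI arc replacement uses
at least two arcs incident to `v` or `w` other than the path arcs `(u,w),(w,v),(v,z)`,
`G'` has no pair of non-path arcs `(v,x)`, `(y,w)` with a directed path from `x` to `y`,
and in `G` there is no directed path from an out-neighbour of `v` other than `w` to an
in-neighbour of `w` other than `v`, then `G'` is acyclic. -/
theorem stmt2 {V : Type} [Fintype V] [DecidableEq V]
    (A : Finset (V × V)) (hAc : Acyclic A) (u v w z : V)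
    (hdist : ([u, v, w, z] : List V).Nodup)
    (huv : (u, v) ∈ A) (hvw : (v, w) ∈ A) (hwz : (w, z) ∈ A)
    (H1 : ∀ (c : List V) (h : c ≠ []), c.Nodup →
      List.Chain (Adj (rnniSwap A u v w z)) (c.getLast h) c →
      ∃ e₁ e₂ : V × V, e₁ ≠ e₂ ∧
        (e₁.1 = v ∨ e₁.2 = v ∨ e₁.1 = w ∨ e₁.2 = w) ∧
        e₁ ∉ ({(u, w), (w, v), (v, z)} : Finset (V × V)) ∧
        (e₂.1 = v ∨ e₂.2 = v ∨ e₂.1 = w ∨ e₂.2 = w) ∧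
        e₂ ∉ ({(u, w), (w, v), (v, z)} : Finset (V × V)) ∧
        e₁ ∈ cycleArcs c h ∧ e₂ ∈ cycleArcs c h)
    (H2 : ¬ ∃ x y : V, (v, x) ∈ rnniSwap A u v w z ∧ (y, w) ∈ rnniSwap A u v w z ∧
      (v, x) ∉ ({(u, w), (w, v), (v, z)} : Finset (V × V)) ∧
      (y, w) ∉ ({(u, w), (w, v), (v, z)} : Finset (V × V)) ∧
      Relation.ReflTransGen (Adj (rnniSwap A u v w z)) x y)
    (H3 : ∀ x y : V, (v, x) ∈ A → x ≠ w → (y, w) ∈ A → y ≠ v →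
      ¬ Relation.ReflTransGen (Adj A) x y) :
    Acyclic (rnniSwap A u v w z) :=
  stmt2_general A hAc u v w z huv hvw hwz H3
end

section
/- Let N be a directed acyclic graph with arcs (z,u), (z,v), (v,w) for distinct vertices u,v,w,z. If N contains no directed path from u to v and no arc (v,u), then the graph N' obtained by replacing arcs (z,u), (z,v), (v,w) with (v,u), (z,v), (z,w) is acyclic. -/
/-- The arc replacement of the root rNNI move: arcs `(z,u),(z,v),(v,w)` are replaced by
`(v,u),(z,v),(z,w)`. -/
def rootSwap {V : Type} [DecidableEq V] (A : Finset (V × V)) (u v w z : V) :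
    Finset (V × V) :=
  (A \ {(z, u), (z, v), (v, w)}) ∪ {(v, u), (z, v), (z, w)}

/-! Every arc of `rootSwap A u v w z` is a path in `A` plus the arc `(v, u)`: the new arc
`(z, w)` is realised by `z → v → w`. Adding `(v, u)` to `A` creates no cycle, since a cycle
through it would close up along a path from `u` to `v` in `A`. -/

open Relation

theorem Acyclic.of_adj_le_transGen {V : Type} {A B : Finset (V × V)} (hA : Acyclic A)
    (hBA : Adj B ≤ TransGen (Adj A)) : Acyclic B :=
  fun x hx => hA x (TransGen.closed hBA x x hx)

theorem transGen_adj_insert {V : Type} [DecidableEq V] {A : Finset (V × V)} {a b x y : V}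
    (h : TransGen (Adj (insert (a, b) A)) x y) :
    TransGen (Adj A) x y ∨ (ReflTransGen (Adj A) x a ∧ ReflTransGen (Adj A) b y) := by
  have adj_insert : ∀ {c d : V}, Adj (insert (a, b) A) c d → Adj A c d ∨ (c = a ∧ d = b) :=
    fun hcd => (Finset.mem_insert.1 hcd).symm.imp_right Prod.mk.inj
  induction h with
  | single hxc =>
    rcases adj_insert hxc with hxc | ⟨rfl, rfl⟩
    · exact .inl (.single hxc)
    · exact .inr ⟨.refl, .refl⟩
  | tail _ hcd ih =>
    rcases adj_insert hcd with hcd | ⟨rfl, rfl⟩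
    · exact ih.imp (·.tail hcd) fun ⟨hxa, hbc⟩ => ⟨hxa, hbc.tail hcd⟩
    · exact .inr ⟨ih.elim TransGen.to_reflTransGen And.left, .refl⟩

theorem Acyclic.insert {V : Type} [DecidableEq V] {A : Finset (V × V)} (hA : Acyclic A)
    {a b : V} (hba : ¬ ReflTransGen (Adj A) b a) : Acyclic (insert (a, b) A) := by
  intro x hx
  rcases transGen_adj_insert hx with hxx | ⟨hxa, hbx⟩
  · exact hA x hxx
  · exact hba (hbx.trans hxa)

theorem adj_rootSwap_le_transGen {V : Type} [DecidableEq V] {A : Finset (V × V)} {u v w z : V}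
    (hzv : (z, v) ∈ A) (hvw : (v, w) ∈ A) :
    Adj (rootSwap A u v w z) ≤ TransGen (Adj (insert (v, u) A)) := by
  intro a b hab
  rcases Finset.mem_union.1 hab with hab | hab
  · exact .single (Finset.mem_insert_of_mem (Finset.mem_sdiff.1 hab).1)
  · simp only [Finset.mem_insert, Finset.mem_singleton, Prod.mk.injEq] at hab
    rcases hab with ⟨rfl, rfl⟩ | ⟨rfl, rfl⟩ | ⟨rfl, rfl⟩
    · exact .single (Finset.mem_insert_self _ _)
    · exact .single (Finset.mem_insert_of_mem hzv)
    · exact .head (Finset.mem_insert_of_mem hzv) (.single (Finset.mem_insert_of_mem hvw))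

theorem stmt3_general {V : Type} [DecidableEq V]
    (A : Finset (V × V)) (hAc : Acyclic A) (u v w z : V)
    (hzv : (z, v) ∈ A) (hvw : (v, w) ∈ A)
    (hpath : ¬ Relation.ReflTransGen (Adj A) u v) :
    Acyclic (rootSwap A u v w z) :=
  (hAc.insert hpath).of_adj_le_transGen (adj_rootSwap_le_transGen hzv hvw)

/-- If a DAG with arcs `(z,u),(z,v),(v,w)` has no directed path from `u` to `v` and
no arc `(v,u)`, then replacing these arcs by `(v,u),(z,v),(z,w)` keeps the graph
acyclic. -/
theorem stmt3 {V : Type} [Fintype V] [DecidableEq V]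
    (A : Finset (V × V)) (hAc : Acyclic A) (u v w z : V)
    (hdist : ([u, v, w, z] : List V).Nodup)
    (hzu : (z, u) ∈ A) (hzv : (z, v) ∈ A) (hvw : (v, w) ∈ A)
    (hpath : ¬ Relation.ReflTransGen (Adj A) u v)
    (hvu : (v, u) ∉ A) :
    Acyclic (rootSwap A u v w z) :=
  stmt3_general A hAc u v w z hzv hvw hpath
end

section
/- Let N be a rooted tree-based phylogenetic network with support tree T, and suppose T contains a directed path u → v → w → z of length 3. Let N' be the network obtained by the rNNI move replacing arcs (u,v),(v,w),(w,z) with (u,w),(w,v),(v,z) (assuming this yields a valid acyclic phylogenetic network). Then T' = T − {(u,v),(v,w),(w,z)} + {(u,w),(w,v),(v,z)} is a support tree of N', so N' is tree-based. -/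
/-- The undirected simple graph underlying a set of arcs. -/
def toSimpleGraph {V : Type} (T : Finset (V × V)) : SimpleGraph V where
  Adj a b := a ≠ b ∧ ((a, b) ∈ T ∨ (b, a) ∈ T)
  symm := ⟨fun _ _ h => ⟨h.1.symm, h.2.symm⟩⟩
  loopless := ⟨fun _ h => h.1 rfl⟩

/-- `T` is a support tree of the network with arc set `A`: a spanning tree of `A`
(on the whole vertex set) whose leaves are exactly the leaves of `A`. -/
def IsSupportTree {V : Type} [Fintype V] [DecidableEq V]
    (A T : Finset (V × V)) : Prop :=
  T ⊆ A ∧ (toSimpleGraph T).IsTree ∧ ∀ v : V, (IsLeaf A v ↔ IsLeaf T v)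

/-!
The undirected graph of `T'` arises from that of `T` by two edge exchanges along the path
`u - v - w - z`: deleting `{u,v}` separates `u` from `w`, so adding `{u,w}` gives a tree again;
in that tree, deleting `{w,z}` separates `v` (still adjacent to `w`) from `z`, so adding `{v,z}`
does too. Leaves are preserved because `u`, `v`, `w` keep an out-arc in both `N'` and `T'`, and
every other vertex keeps its out-degree; in a phylogenetic network the leaves are exactly the
vertices of out-degree `0`, while in `T'` the vertex `z` trades the in-arc `(w,z)` for `(v,z)`,
which is not already in `T` because a tree has no triangle `v, w, z`.
-/

namespace SimpleGraph

variable {V : Type*} {G H : SimpleGraph V}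

theorem Connected.of_adj_le_reachable (hG : G.Connected) (h : G.Adj ≤ H.Reachable) :
    H.Connected := by
  have := hG.nonempty
  refine ⟨fun x y => ?_⟩
  rw [reachable_eq_reflTransGen] at h ⊢
  exact Relation.reflTransGen_closed h _ _ ((reachable_eq_reflTransGen (G := G)) ▸ hG x y)

theorem IsAcyclic.not_adj_of_adj_of_adj (hG : G.IsAcyclic) {a b c : V} (hab : G.Adj a b)
    (hbc : G.Adj b c) : ¬ G.Adj a c := by
  classical
  exact fun hac => hG.cliqueFree le_rfl {a, b, c} (is3Clique_triple_iff.mpr ⟨hab, hac, hbc⟩)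

theorem IsTree.deleteEdges_sup_edge (hG : G.IsTree) {a b c d : V} (hab : G.Adj a b)
    (hac : (G.deleteEdges {s(a, b)}).Reachable a c)
    (hbd : (G.deleteEdges {s(a, b)}).Reachable b d) :
    (G.deleteEdges {s(a, b)} ⊔ edge c d).IsTree := by
  set G₀ := G.deleteEdges {s(a, b)}
  have hbridge : ¬ G₀.Reachable a b := isAcyclic_iff_forall_adj_isBridge.mp hG.isAcyclic hab
  have hcd : ¬ G₀.Reachable c d := fun h => hbridge (hac.trans (h.trans hbd.symm))
  refine ⟨hG.connected.of_adj_le_reachable fun x y hxy => ?_,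
    (hG.isAcyclic.anti (deleteEdges_le _)).sup_edge_of_not_reachable hcd⟩
  by_cases he : s(x, y) = s(a, b)
  · have hcd' : (G₀ ⊔ edge c d).Adj c d := Or.inr ((edge_adj ..).mpr
      ⟨Or.inl ⟨rfl, rfl⟩, fun h => hcd (h ▸ Reachable.refl c)⟩)
    have hab' : (G₀ ⊔ edge c d).Reachable a b :=
      (hac.mono le_sup_left).trans (hcd'.reachable.trans (hbd.symm.mono le_sup_left))
    rcases Sym2.eq_iff.mp he with ⟨rfl, rfl⟩ | ⟨rfl, rfl⟩
    · exact hab'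
    · exact hab'.symm
  · exact Adj.reachable (Or.inl ((deleteEdges_adj ..).mpr ⟨hxy, he⟩))

end SimpleGraph

section RNNI

variable {V : Type}

theorem Acyclic.notMem_swap {A : Finset (V × V)} (hA : Acyclic A) {a b : V} (hab : (a, b) ∈ A) :
    (b, a) ∉ A :=
  fun hba => hA a (.head hab (.single hba))

variable [DecidableEq V]

theorem mem_rnniSwap {B : Finset (V × V)} {u v w z : V} {e : V × V} :
    e ∈ rnniSwap B u v w z ↔ (e ∈ B ∧ e ≠ (u, v) ∧ e ≠ (v, w) ∧ e ≠ (w, z)) ∨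
      e = (u, w) ∨ e = (w, v) ∨ e = (v, z) := by
  simp only [rnniSwap, Finset.mem_union, Finset.mem_sdiff, Finset.mem_insert,
    Finset.mem_singleton, not_or]

theorem rnniSwap_mono {A B : Finset (V × V)} (h : B ⊆ A) (u v w z : V) :
    rnniSwap B u v w z ⊆ rnniSwap A u v w z :=
  Finset.union_subset_union (Finset.sdiff_subset_sdiff h le_rfl) le_rfl

theorem not_isLeaf_of_mem {B : Finset (V × V)} {x y : V} (h : (x, y) ∈ B) : ¬ IsLeaf B x :=
  fun hx => Finset.card_ne_zero_of_mem
    (Finset.mem_filter.mpr ⟨h, rfl⟩ : (x, y) ∈ B.filter (·.1 = x)) hx.2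

theorem not_isLeaf_rnniSwap {B : Finset (V × V)} {u v w z x : V} (hx : x = u ∨ x = v ∨ x = w) :
    ¬ IsLeaf (rnniSwap B u v w z) x := by
  rcases hx with rfl | rfl | rfl
  exacts [not_isLeaf_of_mem (y := w) (mem_rnniSwap.mpr (by simp)),
    not_isLeaf_of_mem (y := z) (mem_rnniSwap.mpr (by simp)),
    not_isLeaf_of_mem (y := v) (mem_rnniSwap.mpr (by simp))]

theorem IsPhyloNetwork.isLeaf_iff_outDeg_eq_zero [Fintype V] {A : Finset (V × V)} {root : V}
    (hN : IsPhyloNetwork A root) (x : V) : IsLeaf A x ↔ outDeg A x = 0 := by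
  by_cases hx : x = root
  · subst hx
    have := hN.root_in
    have := hN.root_out
    unfold IsLeaf
    omega
  · have := hN.vertex_types x hx
    unfold IsLeaf
    omega

theorem outDeg_rnniSwap {B : Finset (V × V)} {u v w z x : V} (hu : x ≠ u) (hv : x ≠ v)
    (hw : x ≠ w) : outDeg (rnniSwap B u v w z) x = outDeg B x := by
  unfold outDeg
  congr 1
  ext ⟨a, b⟩
  simp only [Finset.mem_filter, mem_rnniSwap]
  grind

theorem inDeg_rnniSwap {B : Finset (V × V)} {u v w z x : V} (hwz : (w, z) ∈ B)
    (hvz : (v, z) ∉ B) (hv : x ≠ v) (hw : x ≠ w) :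
    inDeg (rnniSwap B u v w z) x = inDeg B x := by
  unfold inDeg
  by_cases hz : x = z
  · subst hz
    have hmem : (w, x) ∈ B.filter (·.2 = x) := Finset.mem_filter.mpr ⟨hwz, rfl⟩
    have hfilter : (rnniSwap B u v w x).filter (·.2 = x) =
        insert (v, x) ((B.filter (·.2 = x)).erase (w, x)) := by
      ext ⟨a, b⟩
      simp only [Finset.mem_filter, Finset.mem_insert, Finset.mem_erase, mem_rnniSwap]
      grind
    rw [hfilter, Finset.card_insert_of_notMem (by simp [hvz]), Finset.card_erase_of_mem hmem,
      Nat.sub_add_cancel (Finset.card_pos.mpr ⟨_, hmem⟩)]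
  · congr 1
    ext ⟨a, b⟩
    simp only [Finset.mem_filter, mem_rnniSwap]
    grind

theorem isLeaf_rnniSwap_iff {B : Finset (V × V)} {u v w z x : V} (hwz : (w, z) ∈ B)
    (hvz : (v, z) ∉ B) (hu : x ≠ u) (hv : x ≠ v) (hw : x ≠ w) :
    IsLeaf (rnniSwap B u v w z) x ↔ IsLeaf B x := by
  rw [IsLeaf, IsLeaf, inDeg_rnniSwap hwz hvz hv hw, outDeg_rnniSwap hu hv hw]

theorem toSimpleGraph_rnniSwap {T : Finset (V × V)} {u v w z : V} (hvw : (v, w) ∈ T)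
    (hvu : (v, u) ∉ T) (hzw : (z, w) ∉ T) (huw : u ≠ w) (huz : u ≠ z) (hvw' : v ≠ w)
    (hvz : v ≠ z) :
    toSimpleGraph (rnniSwap T u v w z) =
      ((toSimpleGraph T).deleteEdges {s(u, v)} ⊔ SimpleGraph.edge u w).deleteEdges {s(w, z)} ⊔
        SimpleGraph.edge v z := by
  ext x y
  simp only [toSimpleGraph, SimpleGraph.sup_adj, SimpleGraph.deleteEdges_adj,
    SimpleGraph.edge_adj, Set.mem_singleton_iff, Sym2.eq_iff, mem_rnniSwap]
  grind

theorem isTree_toSimpleGraph_rnniSwap {T : Finset (V × V)} (hT : (toSimpleGraph T).IsTree)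
    {u v w z : V} (huv : (u, v) ∈ T) (hvw : (v, w) ∈ T) (hwz : (w, z) ∈ T)
    (hvu : (v, u) ∉ T) (hzw : (z, w) ∉ T) (huv' : u ≠ v) (huw' : u ≠ w) (huz' : u ≠ z)
    (hvw' : v ≠ w) (hvz' : v ≠ z) (hwz' : w ≠ z) :
    (toSimpleGraph (rnniSwap T u v w z)).IsTree := by
  rw [toSimpleGraph_rnniSwap hvw hvu hzw huw' huz' hvw' hvz']
  refine (hT.deleteEdges_sup_edge (c := u) ?_ .rfl (SimpleGraph.Adj.reachable ?_))
    |>.deleteEdges_sup_edge ?_ (SimpleGraph.Adj.reachable ?_) .rfl <;>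
  simp only [toSimpleGraph, SimpleGraph.sup_adj, SimpleGraph.deleteEdges_adj,
    SimpleGraph.edge_adj, Set.mem_singleton_iff, Sym2.eq_iff] <;>
  grind

end RNNI

/-- If `T` is a support tree of a tree-based network `N` containing a directed path
`u → v → w → z`, and the rNNI move replacing `(u,v),(v,w),(w,z)` by `(u,w),(w,v),(v,z)`
yields a valid phylogenetic network `N'`, then `T' = T − {(u,v),(v,w),(w,z)} +
{(u,w),(w,v),(v,z)}` is a support tree of `N'`; in particular `N'` is tree-based. -/
theorem stmt4 {V : Type} [Fintype V] [DecidableEq V]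
    (A : Finset (V × V)) (root : V) (hN : IsPhyloNetwork A root)
    (T : Finset (V × V)) (hT : IsSupportTree A T)
    (u v w z : V) (hdist : ([u, v, w, z] : List V).Nodup)
    (huv : (u, v) ∈ T) (hvw : (v, w) ∈ T) (hwz : (w, z) ∈ T)
    (hvalid : IsPhyloNetwork (rnniSwap A u v w z) root) :
    IsSupportTree (rnniSwap A u v w z) (rnniSwap T u v w z) ∧
      ∃ T' : Finset (V × V), IsSupportTree (rnniSwap A u v w z) T' := by
  obtain ⟨hTA, hTtree, hleaf⟩ := hT
  simp only [List.nodup_cons, List.mem_cons, List.not_mem_nil, List.nodup_nil, or_false, not_or,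
    and_true, not_false_eq_true] at hdist
  obtain ⟨⟨huv', huw', huz'⟩, ⟨hvw', hvz'⟩, hwz'⟩ := hdist
  have hvzT : (v, z) ∉ T := fun hvz =>
    hTtree.isAcyclic.not_adj_of_adj_of_adj ⟨hvw', .inl hvw⟩ ⟨hwz', .inl hwz⟩
      ⟨hvz', .inl hvz⟩
  have hT' : IsSupportTree (rnniSwap A u v w z) (rnniSwap T u v w z) := by
    refine ⟨rnniSwap_mono hTA u v w z, isTree_toSimpleGraph_rnniSwap hTtree huv hvw hwz
      (fun h => hN.acyclic.notMem_swap (hTA huv) (hTA h))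
      (fun h => hN.acyclic.notMem_swap (hTA hwz) (hTA h))
      huv' huw' huz' hvw' hvz' hwz', fun x => ?_⟩
    by_cases hx : x = u ∨ x = v ∨ x = w
    · exact iff_of_false (not_isLeaf_rnniSwap hx) (not_isLeaf_rnniSwap hx)
    · obtain ⟨hxu, hxv, hxw⟩ : x ≠ u ∧ x ≠ v ∧ x ≠ w := by
        simpa only [not_or] using hx
      rw [hvalid.isLeaf_iff_outDeg_eq_zero, outDeg_rnniSwap hxu hxv hxw,
        ← hN.isLeaf_iff_outDeg_eq_zero, hleaf, isLeaf_rnniSwap_iff hwz hvzT hxu hxv hxw]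
  exact ⟨hT', _, hT'⟩
end
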